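/- Let A(x) = A₀ + x₁A₁ + ⋯ + xₙAₙ with Aᵢ real symmetric m × m matrices, S = {x : A(x) ⪰ 0}, and suppose x* ∈ S has rank A(x*) = p ≥ 1. If every Euclidean open neighborhood U of x* contains a point x with rank A(x) ≤ p and A(x) not positive semidefinite, then rank A(x*) ≤ p − 1, a contradiction; hence no such x* exists. Equivalently: if x* ∈ S with rank A(x*) = p, then there exists an open neighborhood U of x* such that every x ∈ U with rank A(x) ≤ p satisfies A(x) ⪰ 0. -/

import Mathlib

/-!
On the range `W` of `A(x*)` the quadratic form of `A(x*)` is positive definite, and positivity on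
the unit sphere of `W` is an open condition in `x` by compactness. So near `x*` the form of `A(x)`
is positive on `W \ {0}`; then `W ∩ ker A(x) = 0`, and if moreover `rank A(x) ≤ p = dim W` a
dimension count gives `W ⊕ ker A(x) = ℝᵐ`, and the form of `A(x)` at `w + k` is its value at `w`.
-/

open Matrix Filter Topology Module
open scoped ComplexOrder

namespace Matrix

variable {ι 𝕜 : Type*} [Fintype ι] [RCLike 𝕜]

theorem PosSemidef.dotProduct_mulVec_pos_of_mem_range {M : Matrix ι ι 𝕜} (hM : M.PosSemidef)
    {v : ι → 𝕜} (hv : v ∈ LinearMap.range M.mulVecLin) (hv0 : v ≠ 0) :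
    0 < star v ⬝ᵥ M *ᵥ v := by
  refine (hM.dotProduct_mulVec_nonneg v).lt_of_ne' fun hzero => hv0 ?_
  obtain ⟨u, rfl⟩ := hv
  have hker : M *ᵥ (M *ᵥ u) = 0 := (hM.dotProduct_mulVec_zero_iff _).mp hzero
  rw [← dotProduct_star_self_eq_zero, mulVecLin_apply, star_mulVec, ← dotProduct_mulVec,
    hM.isHermitian.eq, hker, dotProduct_zero]

theorem IsHermitian.posSemidef_of_rank_le_finrank {B : Matrix ι ι 𝕜} (hB : B.IsHermitian)
    {W : Submodule 𝕜 (ι → 𝕜)} (hpos : ∀ v ∈ W, v ≠ 0 → 0 < star v ⬝ᵥ B *ᵥ v)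
    (hrank : B.rank ≤ finrank 𝕜 W) : B.PosSemidef := by
  have hdisj : Disjoint W (LinearMap.ker B.mulVecLin) := by
    refine Submodule.disjoint_def.mpr fun v hvW hvK => by_contra fun hv0 => ?_
    have hBv : B *ᵥ v = 0 := hvK
    simpa [hBv] using hpos v hvW hv0
  have hcodisj : W ⊔ LinearMap.ker B.mulVecLin = ⊤ := by
    refine Submodule.eq_top_of_disjoint _ _ ?_ hdisj
    have := LinearMap.finrank_range_add_finrank_ker B.mulVecLin
    rw [rank] at hrank
    omega
  refine posSemidef_iff_dotProduct_mulVec.mpr ⟨hB, fun v => ?_⟩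
  obtain ⟨w, hw, k, hk, rfl⟩ := Submodule.mem_sup.mp (hcodisj ▸ Submodule.mem_top (x := v))
  have hBk : B *ᵥ k = 0 := hk
  have hkB : star k ᵥ* B = 0 := by
    rw [← hB.eq, vecMul_conjTranspose, star_star, hBk, star_zero]
  rw [mulVec_add, hBk, add_zero, star_add, add_dotProduct, dotProduct_mulVec (star k), hkB,
    zero_dotProduct, add_zero]
  rcases eq_or_ne w 0 with rfl | hw0
  · simp
  · exact (hpos w hw hw0).le

theorem eventually_forall_dotProduct_mulVec_pos {X : Type*} [TopologicalSpace X] {M : X → Matrix ι ι ℝ} {x₀ : X} (hM : ContinuousAt M x₀)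
    (W : Submodule ℝ (ι → ℝ)) (h : ∀ v ∈ W, v ≠ 0 → 0 < star v ⬝ᵥ M x₀ *ᵥ v) :
    ∀ᶠ x in 𝓝 x₀, ∀ v ∈ W, v ≠ 0 → 0 < star v ⬝ᵥ M x *ᵥ v := by
  have hS : IsCompact (Metric.sphere (0 : ι → ℝ) 1 ∩ W) :=
    (isCompact_sphere 0 1).inter_right W.closed_of_finiteDimensional
  have hsphere := hS.eventually_forall_of_forall_eventually
    (P := fun x u => 0 < star u ⬝ᵥ M x *ᵥ u) fun u hu => by
      refine continuousAt_const.eventually_lt ?_ (h u hu.2 (ne_zero_of_mem_unit_sphere ⟨u, hu.1⟩))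
      fun_prop
  refine hsphere.mono fun x hx v hv hv0 => ?_
  have hnorm : 0 < ‖v‖⁻¹ := inv_pos.mpr (norm_pos_iff.mpr hv0)
  have := hx (‖v‖⁻¹ • v) ⟨by simp [norm_smul, hv0], W.smul_mem _ hv⟩
  simp only [star_trivial, mulVec_smul, dotProduct_smul, smul_dotProduct, smul_eq_mul] at this
  exact (mul_pos_iff_of_pos_left hnorm).mp ((mul_pos_iff_of_pos_left hnorm).mp this)

end Matrix

theorem psd_rank_locally_stable (m n p : ℕ)
    (A0 : Matrix (Fin m) (Fin m) ℝ) (A : Fin n → Matrix (Fin m) (Fin m) ℝ)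
    (hsym0 : A0.IsSymm) (hsym : ∀ i, (A i).IsSymm)
    (xs : Fin n → ℝ) (hxs : (A0 + ∑ i, xs i • A i).PosSemidef)
    (hrk : (A0 + ∑ i, xs i • A i).rank = p) :
    ∃ U : Set (Fin n → ℝ), IsOpen U ∧ xs ∈ U ∧
      ∀ x ∈ U, (A0 + ∑ i, x i • A i).rank ≤ p → (A0 + ∑ i, x i • A i).PosSemidef := by
  have hherm (x : Fin n → ℝ) : (A0 + ∑ i, x i • A i).IsHermitian := by
    simp [IsSymm, transpose_sum, hsym0.eq, fun i => (hsym i).eq]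
  have hcont : Continuous fun x : Fin n → ℝ => A0 + ∑ i, x i • A i := by fun_prop
  obtain ⟨U, hpos, hU, hxsU⟩ := eventually_nhds_iff.mp <|
    eventually_forall_dotProduct_mulVec_pos hcont.continuousAt _ fun _ =>
      hxs.dotProduct_mulVec_pos_of_mem_range
  exact ⟨U, hU, hxsU, fun x hx hrank =>
    (hherm x).posSemidef_of_rank_le_finrank (hpos x hx) (hrank.trans hrk.ge)⟩
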